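/- arXiv:0911.3760 — 2 statements merged into one kernel-verified Lean document; each statement's English description precedes it below -/
import Mathlib

section
/- Let F be an r-sort species admitting a composition operator Η. For every nonempty r-tuple Ω of finite sets and every choice of base point (ω,ρ) ∈ Ω (meaning ω belongs to the ρ-th component of Ω), one has F[Ω] = ⋃ η(F_Η[Ω1] × F[Ω − Ω1]), the union being over all r-tuples Ω1 with (ω,ρ) ∈ Ω1 ⊆ Ω (containment componentwise), where Ω − Ω1 denotes componentwise set difference. -/
open scoped Classical

noncomputable section

/-- Objects of `Set^r`: `r`-tuples of finite sets (realized as finite subsets of `ℕ`). -/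
abbrev Obj (r : ℕ) := Fin r → Finset ℕ

variable {r : ℕ}

/-- The `r`-tuple of empty sets. -/
def oEmpty (r : ℕ) : Obj r := fun _ => ∅

/-- Componentwise union (the disjoint union `⨿` when the arguments are
componentwise disjoint). -/
def oUnion (Ω₁ Ω₂ : Obj r) : Obj r := fun i => Ω₁ i ∪ Ω₂ i

/-- Componentwise intersection. -/
def oInter (Ω₁ Ω₂ : Obj r) : Obj r := fun i => Ω₁ i ∩ Ω₂ i

/-- Componentwise set difference. -/
def oDiff (Ω₁ Ω₂ : Obj r) : Obj r := fun i => Ω₁ i \ Ω₂ i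

/-- Componentwise disjointness. -/
def oDisj (Ω₁ Ω₂ : Obj r) : Prop := ∀ i, Disjoint (Ω₁ i) (Ω₂ i)

/-- Componentwise containment. -/
def oSub (Ω₁ Ω₂ : Obj r) : Prop := ∀ i, Ω₁ i ⊆ Ω₂ i

/-- A morphism of `Set^r`: an `r`-tuple of bijections between the components. -/
def Mor (Ω₁ Ω₂ : Obj r) : Type := ∀ i, {x // x ∈ Ω₁ i} ≃ {x // x ∈ Ω₂ i}

/-- The identity morphism. -/
def idMor (Ω : Obj r) : Mor Ω Ω := fun _ => Equiv.refl _

/-- Composition of morphisms. -/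
def compMor {Ω₁ Ω₂ Ω₃ : Obj r} (f : Mor Ω₁ Ω₂) (g : Mor Ω₂ Ω₃) : Mor Ω₁ Ω₃ :=
  fun i => (f i).trans (g i)

/-- An `r`-sort species: a (covariant) functor from `Set^r` to the category of
finite sets and bijections.  The value `F[Ω]` is the finite set `obj Ω`, and the
action on a morphism `f` is encoded by the function `map f : ℕ → ℕ` (only its
values on `obj Ω₁` are relevant). -/
structure Species (r : ℕ) where
  obj : Obj r → Finset ℕ
  map : ∀ {Ω₁ Ω₂ : Obj r}, Mor Ω₁ Ω₂ → ℕ → ℕ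
  map_mem : ∀ {Ω₁ Ω₂ : Obj r} (f : Mor Ω₁ Ω₂), ∀ x ∈ obj Ω₁, map f x ∈ obj Ω₂
  map_id : ∀ (Ω : Obj r), ∀ x ∈ obj Ω, map (idMor Ω) x = x
  map_comp : ∀ {Ω₁ Ω₂ Ω₃ : Obj r} (f : Mor Ω₁ Ω₂) (g : Mor Ω₂ Ω₃), ∀ x ∈ obj Ω₁,
    map (compMor f g) x = map g (map f x)

/-- The canonical identification of a disjoint union `s ∪ t` with the sum `s ⊕ t`. -/
def finsetSumEquiv {s t : Finset ℕ} (h : Disjoint s t) :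
    {x // x ∈ s ∪ t} ≃ {x // x ∈ s} ⊕ {x // x ∈ t} :=
  (Equiv.subtypeEquivRight (fun x => by simp)).trans
    (Equiv.Set.union (s := (↑s : Set ℕ)) (t := (↑t : Set ℕ)) (by exact_mod_cast h))

/-- The disjoint union of two bijections, as a bijection between unions. -/
def finsetUnionEquiv {s t s' t' : Finset ℕ} (h : Disjoint s t) (h' : Disjoint s' t')
    (f : {x // x ∈ s} ≃ {x // x ∈ s'}) (g : {x // x ∈ t} ≃ {x // x ∈ t'}) :
    {x // x ∈ s ∪ t} ≃ {x // x ∈ s' ∪ t'} :=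
  (finsetSumEquiv h).trans ((f.sumCongr g).trans (finsetSumEquiv h').symm)

/-- The disjoint union `f ⨿ g` of two morphisms of `Set^r`. -/
def morUnion {Ω₁ Ω₂ Ω₁' Ω₂' : Obj r} (h : oDisj Ω₁ Ω₂) (h' : oDisj Ω₁' Ω₂')
    (f : Mor Ω₁ Ω₁') (g : Mor Ω₂ Ω₂') : Mor (oUnion Ω₁ Ω₂) (oUnion Ω₁' Ω₂') :=
  fun i => finsetUnionEquiv (h i) (h' i) (f i) (g i)

/-- A composition operator `Η` for the species `F`: a natural transformation from
`F × F` (on pairs of componentwise disjoint objects) to `F ∘ ⨿` with injective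
components, satisfying Axiom (D1). -/
structure CompOp {r : ℕ} (F : Species r) where
  η : Obj r → Obj r → ℕ × ℕ → ℕ
  mem_η : ∀ {Ω₁ Ω₂ : Obj r}, oDisj Ω₁ Ω₂ → ∀ x ∈ F.obj Ω₁, ∀ y ∈ F.obj Ω₂,
    η Ω₁ Ω₂ (x, y) ∈ F.obj (oUnion Ω₁ Ω₂)
  inj_η : ∀ {Ω₁ Ω₂ : Obj r}, oDisj Ω₁ Ω₂ →
    Set.InjOn (η Ω₁ Ω₂) ((F.obj Ω₁ : Set ℕ) ×ˢ (F.obj Ω₂ : Set ℕ))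
  natural : ∀ {Ω₁ Ω₂ Ω₁' Ω₂' : Obj r} (h : oDisj Ω₁ Ω₂) (h' : oDisj Ω₁' Ω₂')
    (f : Mor Ω₁ Ω₁') (g : Mor Ω₂ Ω₂'), ∀ x ∈ F.obj Ω₁, ∀ y ∈ F.obj Ω₂,
    F.map (morUnion h h' f g) (η Ω₁ Ω₂ (x, y)) = η Ω₁' Ω₂' (F.map f x, F.map g y)
  D1 : ∀ {Ω₁ Ω₂ Ω₃ Ω₄ : Obj r}, oDisj Ω₁ Ω₂ → oDisj Ω₃ Ω₄ →
    oUnion Ω₁ Ω₂ = oUnion Ω₃ Ω₄ →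
    η Ω₁ Ω₂ '' ((F.obj Ω₁ : Set ℕ) ×ˢ (F.obj Ω₂ : Set ℕ)) ∩
      η Ω₃ Ω₄ '' ((F.obj Ω₃ : Set ℕ) ×ˢ (F.obj Ω₄ : Set ℕ)) =
    η Ω₁ Ω₂ ''
      ((η (oInter Ω₁ Ω₃) (oInter Ω₁ Ω₄) ''
          ((F.obj (oInter Ω₁ Ω₃) : Set ℕ) ×ˢ (F.obj (oInter Ω₁ Ω₄) : Set ℕ))) ×ˢ
        (η (oInter Ω₂ Ω₃) (oInter Ω₂ Ω₄) ''
          ((F.obj (oInter Ω₂ Ω₃) : Set ℕ) ×ˢ (F.obj (oInter Ω₂ Ω₄) : Set ℕ))))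

/-- The set `F_Η[Ω]` of indecomposable elements of `F[Ω]`. -/
def indec (F : Species r) (E : CompOp F) (Ω : Obj r) : Set ℕ :=
  if Ω = oEmpty r then ∅
  else (F.obj Ω : Set ℕ) \
    ⋃ (p : Obj r × Obj r) (_ : oDisj p.1 p.2) (_ : p.1 ≠ oEmpty r) (_ : p.2 ≠ oEmpty r)
      (_ : oUnion p.1 p.2 = Ω),
      E.η p.1 p.2 '' ((F.obj p.1 : Set ℕ) ×ˢ (F.obj p.2 : Set ℕ))

/-- The sets `F_Η^(k)[Ω]` of elements of `F[Ω]` consisting of exactly `k`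
indecomposable components. -/
def indecK (F : Species r) (E : CompOp F) : ℕ → Obj r → Set ℕ
  | 0 => fun Ω => if Ω = oEmpty r then (F.obj (oEmpty r) : Set ℕ) else ∅
  | (k + 1) => fun Ω => ⋃ (Ω₁ : Obj r) (_ : oSub Ω₁ Ω),
      E.η Ω₁ (oDiff Ω Ω₁) '' ((indec F E Ω₁) ×ˢ (indecK F E k (oDiff Ω Ω₁)))

/-- `Ω_I`: the componentwise disjoint union of the family `Ωs` over the index set `s`. -/
def bigU {ι : Type} [DecidableEq ι] (Ωs : ι → Obj r) (s : Finset ι) : Obj r :=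
  fun i => s.biUnion (fun j => Ωs j i)

/-- `Brack F E Ωs leaf s B` says that `B` is an `Η`-bracketing of the sets
`leaf (Ωs i)`, `i ∈ s` (each occurring exactly once).  For `leaf Ω = F[Ω]` this is an
`Η`-bracketing of the `F[Ωs i]`; for `leaf = indec F E` it is an `Η`-bracketing of
the `F_Η[Ωs i]`. -/
inductive Brack (F : Species r) (E : CompOp F) {ι : Type} [DecidableEq ι]
    (Ωs : ι → Obj r) (leaf : Obj r → Set ℕ) : Finset ι → Set ℕ → Prop
  | single (i : ι) : Brack F E Ωs leaf {i} (leaf (Ωs i))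
  | node {s t : Finset ι} {B₁ B₂ : Set ℕ} :
      Disjoint s t → s.Nonempty → t.Nonempty →
      Brack F E Ωs leaf s B₁ → Brack F E Ωs leaf t B₂ →
      Brack F E Ωs leaf (s ∪ t) (E.η (bigU Ωs s) (bigU Ωs t) '' (B₁ ×ˢ B₂))

/-- A `Λ`-weight on `(F, Η)`: Axioms (W0), (W1), (W2). -/
structure Weight {r : ℕ} (F : Species r) (E : CompOp F) (Λ : Type) [CommRing Λ]
    [Algebra ℚ Λ] where
  w : Obj r → ℕ → Λ
  W0 : ∀ x ∈ F.obj (oEmpty r), w (oEmpty r) x = 1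
  W1 : ∀ {Ω Ω' : Obj r} (f : Mor Ω Ω'), ∀ x ∈ F.obj Ω, w Ω' (F.map f x) = w Ω x
  W2 : ∀ {Ω₁ Ω₂ : Obj r}, oDisj Ω₁ Ω₂ → ∀ x ∈ indec F E Ω₁, ∀ y ∈ F.obj Ω₂,
    w (oUnion Ω₁ Ω₂) (E.η Ω₁ Ω₂ (x, y)) = w Ω₁ x * w Ω₂ y

/-- The standard object `([n₁], …, [n_r])`, with `[n] = {1, …, n}`. -/
def stdObj {r : ℕ} (n : Fin r → ℕ) : Obj r := fun i => Finset.Icc 1 (n i)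

/-- The exponential generating function
`Σ_{n₁,…,n_r ≥ 0} Σ_{x ∈ S[([n₁],…,[n_r])]} w(x) z₁^{n₁} ⋯ z_r^{n_r}/(n₁! ⋯ n_r!)`
of a subfamily `S` of a species `F`, with respect to a weight `w`. -/
def GF {r : ℕ} {Λ : Type} [CommRing Λ] [Algebra ℚ Λ] (F : Species r)
    (S : Obj r → Set ℕ) (w : Obj r → ℕ → Λ) : MvPowerSeries (Fin r) Λ :=
  fun d => (algebraMap ℚ Λ (∏ i, (1 / (Nat.factorial (d i)) : ℚ))) *
    ∑ x ∈ (F.obj (stdObj fun i => d i)).filter (fun x => x ∈ S (stdObj fun i => d i)),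
      w (stdObj fun i => d i) x

/-- The exponential `exp f = Σ_{k ≥ 0} f^k / k!` of a multivariate formal power
series `f` with zero constant term (the coefficient of a given monomial only
receives contributions from `k` at most the total degree). -/
def mvExp {σ Λ : Type} [CommRing Λ] [Algebra ℚ Λ] (f : MvPowerSeries σ Λ) :
    MvPowerSeries σ Λ :=
  fun d => ∑ k ∈ Finset.range ((d.sum fun _ m => m) + 1),
    algebraMap ℚ Λ ((1 : ℚ) / (Nat.factorial k)) * MvPowerSeries.coeff d (f ^ k)

/-- The logarithm `log f = Σ_{k ≥ 1} (-1)^{k+1} (f-1)^k / k` of a multivariate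
formal power series `f` with constant term `1`. -/
def mvLog {σ Λ : Type} [CommRing Λ] [Algebra ℚ Λ] (f : MvPowerSeries σ Λ) :
    MvPowerSeries σ Λ :=
  fun d => ∑ k ∈ Finset.Icc 1 (d.sum fun _ m => m),
    algebraMap ℚ Λ ((-1 : ℚ) ^ (k + 1) / k) * MvPowerSeries.coeff d ((f - 1) ^ k)

/-- The refined generating function `G̃F_F(z₁,…,z_r,y)`, a power series in
`z₁, …, z_r` with coefficients that are polynomials in `y` (recorded via
`Polynomial Λ`, the variable `y` being `Polynomial.X`):
`Σ_{n₁,…,n_r ≥ 0} Σ_k Σ_{x ∈ F_Η^(k)[([n₁],…,[n_r])]} y^k w(x) z₁^{n₁}⋯z_r^{n_r}/(n₁!⋯n_r!)`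
(for fixed `n₁, …, n_r` only the `k ≤ n₁ + ⋯ + n_r` contribute, since
`F_Η^(k)[Ω] = ∅ for k > ‖Ω‖`). -/
def tGF {r : ℕ} {Λ : Type} [CommRing Λ] [Algebra ℚ Λ] (F : Species r) (E : CompOp F)
    (w : Obj r → ℕ → Λ) : MvPowerSeries (Fin r) (Polynomial Λ) :=
  fun d => Polynomial.C (algebraMap ℚ Λ (∏ i, (1 / (Nat.factorial (d i)) : ℚ))) *
    ∑ k ∈ Finset.range ((∑ i, d i) + 1), Polynomial.X ^ k *
      Polynomial.C (∑ x ∈ (F.obj (stdObj fun i => d i)).filter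
          (fun x => x ∈ indecK F E k (stdObj fun i => d i)),
        w (stdObj fun i => d i) x)

/-- The species `E(F_Η)` of sets of `F_Η`-structures:  `E(F_Η)[Ω]` consists of all
finite sets `{(x₁,Ω₁),…,(x_k,Ω_k)}` with `x_i ∈ F_Η[Ω_i]`, the `Ω_i` nonempty and
pairwise componentwise disjoint, and `Ω₁ ⨿ ⋯ ⨿ Ω_k = Ω`. -/
def ESet {r : ℕ} (F : Species r) (E : CompOp F) (Ω : Obj r) :
    Set (Finset (ℕ × Obj r)) :=
  { s | (∀ p ∈ s, p.1 ∈ indec F E p.2 ∧ p.2 ≠ oEmpty r) ∧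
        (∀ p ∈ s, ∀ q ∈ s, p ≠ q → oDisj p.2 q.2) ∧
        (∀ i, Ω i = s.biUnion (fun p => p.2 i)) }

/-- The bijection between a finite set and its image under a map injective on it. -/
def imageEquiv {u : Finset ℕ} (g : ℕ → ℕ) (hg : Set.InjOn g (u : Set ℕ)) :
    {x // x ∈ u} ≃ {x // x ∈ u.image g} :=
  Equiv.ofBijective (fun x => ⟨g x, Finset.mem_image_of_mem g x.2⟩) (by
    constructor
    · rintro ⟨a, ha⟩ ⟨b, hb⟩ hab
      exact Subtype.ext (hg (by exact_mod_cast ha) (by exact_mod_cast hb)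
        (congrArg Subtype.val hab))
    · rintro ⟨y, hy⟩
      rcases Finset.mem_image.mp hy with ⟨a, ha, rfl⟩
      exact ⟨⟨a, ha⟩, rfl⟩)

/-- The underlying function `ℕ → ℕ` of the `i`-th component of a morphism. -/
def apMor {Ω Ω' : Obj r} (f : Mor Ω Ω') (i : Fin r) (a : ℕ) : ℕ :=
  if h : a ∈ Ω i then ((f i) ⟨a, h⟩ : ℕ) else a

/-- The componentwise image of a subobject `O ⊆ Ω` under a morphism `f : Ω → Ω'`. -/
def oImage {Ω Ω' : Obj r} (f : Mor Ω Ω') (O : Obj r) : Obj r :=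
  fun i => (O i).image (apMor f i)

/-- The restriction of a morphism `f : Ω → Ω'` to a subobject `O ⊆ Ω`. -/
def restrictMor {Ω Ω' : Obj r} (f : Mor Ω Ω') {O : Obj r} (hO : oSub O Ω) :
    Mor O (oImage f O) :=
  fun i => imageEquiv (apMor f i) (by
    intro a ha b hb hab
    have ha' : a ∈ Ω i := hO i (by exact_mod_cast ha)
    have hb' : b ∈ Ω i := hO i (by exact_mod_cast hb)
    have h1 : ((f i) ⟨a, ha'⟩ : ℕ) = ((f i) ⟨b, hb'⟩ : ℕ) := by
      simpa [apMor, dif_pos ha', dif_pos hb'] using hab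
    have h2 := (f i).injective (Subtype.ext h1)
    exact congrArg Subtype.val h2)

/-- The induced action of a morphism `f : Ω → Ω'` on `E(F_Η)[Ω]`. -/
def Emap {r : ℕ} (F : Species r) {Ω Ω' : Obj r} (f : Mor Ω Ω')
    (s : Finset (ℕ × Obj r)) : Finset (ℕ × Obj r) :=
  s.image (fun p =>
    if h : oSub p.2 Ω then (F.map (restrictMor f h) p.1, oImage f p.2) else p)
/-
Peel off indecomposable factors containing the base point. An element of `F[Ω]` is first
written as `η(x, e)` with `e ∈ F[∅]`, using the unit laws that (D1) forces. If the factor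
`x ∈ F[Ω₁]` is decomposable, `x = η(a, b)` on `Ω₁ = A ⨿ B`, then by commutativity we may
assume the base point lies in `A`, and associativity regroups `η(η(a, b), y)` as an element
of `η(F[A] × F[Ω − A])`. Since `A ⊊ Ω₁`, this terminates by well-founded induction.
-/

section ObjLemmas

variable {A B Ω : Obj r}

lemma oDisj.symm (h : oDisj A B) : oDisj B A := fun i => (h i).symm

lemma oDisj_oEmpty (A : Obj r) : oDisj A (oEmpty r) := fun _ => Finset.disjoint_empty_right _

lemma oEmpty_oDisj (A : Obj r) : oDisj (oEmpty r) A := fun _ => Finset.disjoint_empty_left _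

lemma oDisj_oDiff (A Ω : Obj r) : oDisj A (oDiff Ω A) := fun _ => Finset.disjoint_sdiff

lemma oUnion_comm (A B : Obj r) : oUnion A B = oUnion B A :=
  funext fun _ => Finset.union_comm _ _

lemma oUnion_oEmpty (A : Obj r) : oUnion A (oEmpty r) = A := funext fun _ => Finset.union_empty _

lemma oEmpty_oUnion (A : Obj r) : oUnion (oEmpty r) A = A := funext fun _ => Finset.empty_union _

lemma oUnion_oDiff (h : oSub A Ω) : oUnion A (oDiff Ω A) = Ω :=
  funext fun i => Finset.union_sdiff_of_subset (h i)

lemma oDiff_self (A : Obj r) : oDiff A A = oEmpty r := funext fun _ => Finset.sdiff_self _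

lemma oInter_self (A : Obj r) : oInter A A = A := funext fun _ => Finset.inter_self _

lemma oInter_eq_oEmpty (h : oDisj A B) : oInter A B = oEmpty r :=
  funext fun i => Finset.disjoint_iff_inter_eq_empty.mp (h i)

lemma oSub_oUnion_left (A B : Obj r) : oSub A (oUnion A B) := fun _ => Finset.subset_union_left

lemma oSub_oUnion_right (A B : Obj r) : oSub B (oUnion A B) := fun _ => Finset.subset_union_right

lemma oUnion_oDiff_oUnion (hAB : oDisj A B) (h : oSub (oUnion A B) Ω) :
    oUnion B (oDiff Ω (oUnion A B)) = oDiff Ω A := by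
  funext i
  ext t
  have hB : t ∈ B i → t ∉ A i := fun ht => Finset.disjoint_right.mp (hAB i) ht
  have hΩ : t ∈ B i → t ∈ Ω i := fun ht => h i (Finset.mem_union_right _ ht)
  simp only [oUnion, oDiff, Finset.mem_union, Finset.mem_sdiff]
  tauto

lemma lt_oUnion_of_ne_oEmpty (hAB : oDisj A B) (hB : B ≠ oEmpty r) : A < oUnion A B := by
  obtain ⟨j, hj⟩ : ∃ j, (B j).Nonempty := by
    by_contra! h
    exact hB (funext h)
  obtain ⟨t, ht⟩ := hj
  refine Pi.lt_def.mpr ⟨oSub_oUnion_left A B, j, ?_⟩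
  exact Finset.ssubset_iff_subset_ne.mpr ⟨Finset.subset_union_left, fun h =>
    Finset.disjoint_right.mp (hAB j) ht (h ▸ Finset.mem_union_right _ ht)⟩

end ObjLemmas

namespace CompOp

variable {F : Species r} (E : CompOp F) {A B C Ω : Obj r}

/-- `η(F[A] × F[B])`. -/
def img (A B : Obj r) : Set ℕ := E.η A B '' ((F.obj A : Set ℕ) ×ˢ (F.obj B : Set ℕ))

lemma img_subset (hAB : oDisj A B) : E.img A B ⊆ F.obj (oUnion A B) := by
  rintro _ ⟨⟨a, b⟩, ⟨ha, hb⟩, rfl⟩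
  exact E.mem_η hAB a ha b hb

/-- (D1) applied to one decomposition taken twice. -/
lemma img_eq_img_oEmpty (hAB : oDisj A B) :
    E.img A B = E.η A B '' (E.img A (oEmpty r) ×ˢ E.img (oEmpty r) B) := by
  have hD := E.D1 hAB hAB rfl
  rwa [Set.inter_self, oInter_self, oInter_self, oInter_eq_oEmpty hAB,
    oInter_eq_oEmpty hAB.symm] at hD

lemma mem_img_oEmpty (hAB : oDisj A B) {a b : ℕ} (ha : a ∈ F.obj A) (hb : b ∈ F.obj B) :
    a ∈ E.img A (oEmpty r) ∧ b ∈ E.img (oEmpty r) B := by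
  have hab : E.η A B (a, b) ∈ E.img A B := ⟨(a, b), ⟨ha, hb⟩, rfl⟩
  rw [E.img_eq_img_oEmpty hAB] at hab
  obtain ⟨⟨a', b'⟩, ⟨ha', hb'⟩, heq⟩ := hab
  have ha'F : a' ∈ (F.obj A : Set ℕ) := by
    simpa only [oUnion_oEmpty] using E.img_subset (oDisj_oEmpty A) ha'
  have hb'F : b' ∈ (F.obj B : Set ℕ) := by
    simpa only [oEmpty_oUnion] using E.img_subset (oEmpty_oDisj B) hb'
  obtain ⟨rfl, rfl⟩ := Prod.ext_iff.mp
    (E.inj_η hAB (Set.mk_mem_prod ha'F hb'F) (Set.mk_mem_prod ha hb) heq)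
  exact ⟨ha', hb'⟩

/-- A disjoint copy `Ω + N` of `Ω` carries a structure, and (D1) splits the pair of them
through `F[∅]`. -/
lemma obj_oEmpty_nonempty (E : CompOp F) {x : ℕ} (hx : x ∈ F.obj Ω) :
    (F.obj (oEmpty r)).Nonempty := by
  set N : ℕ := (Finset.univ.sup fun i => (Ω i).sup id) + 1
  set Ω' : Obj r := fun i => (Ω i).image (· + N)
  have hd : oDisj Ω Ω' := by
    intro i
    refine Finset.disjoint_left.mpr fun a ha hmem => ?_
    obtain ⟨b, -, rfl⟩ := Finset.mem_image.mp hmem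
    have h1 : b + N ≤ (Ω i).sup id := Finset.le_sup (f := id) ha
    have h2 : (Ω i).sup id ≤ Finset.univ.sup fun i => (Ω i).sup id :=
      Finset.le_sup (f := fun i => (Ω i).sup id) (Finset.mem_univ i)
    omega
  let f : Mor Ω Ω' := fun i => imageEquiv (· + N) fun a _ b _ h => Nat.add_right_cancel h
  obtain ⟨-, ⟨⟨e, y⟩, ⟨he, -⟩, -⟩⟩ := E.mem_img_oEmpty hd hx (F.map_mem f x hx)
  exact ⟨e, he⟩

variable {E}

lemma img_oEmpty_right (he : (F.obj (oEmpty r)).Nonempty) (A : Obj r) :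
    E.img A (oEmpty r) = F.obj A := by
  obtain ⟨e, he⟩ := he
  refine subset_antisymm ?_ fun a ha => (E.mem_img_oEmpty (oDisj_oEmpty A) ha he).1
  simpa only [oUnion_oEmpty] using E.img_subset (oDisj_oEmpty A)

lemma img_oEmpty_left (he : (F.obj (oEmpty r)).Nonempty) (B : Obj r) :
    E.img (oEmpty r) B = F.obj B := by
  obtain ⟨e, he⟩ := he
  refine subset_antisymm ?_ fun b hb => (E.mem_img_oEmpty (oEmpty_oDisj B) he hb).2
  simpa only [oEmpty_oUnion] using E.img_subset (oEmpty_oDisj B)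

lemma img_subset_img_swap (he : (F.obj (oEmpty r)).Nonempty) (hAB : oDisj A B) :
    E.img A B ⊆ E.img B A := by
  have hD := E.D1 hAB hAB.symm (oUnion_comm A B)
  rw [oInter_eq_oEmpty hAB, oInter_self, oInter_self, oInter_eq_oEmpty hAB.symm] at hD
  change E.img A B ∩ E.img B A = E.η A B '' (E.img (oEmpty r) A ×ˢ E.img B (oEmpty r)) at hD
  rw [img_oEmpty_left he, img_oEmpty_right he] at hD
  exact Set.inter_eq_left.mp hD

lemma img_assoc_subset (he : (F.obj (oEmpty r)).Nonempty)
    (hAB : oDisj A B) (hAC : oDisj A C) (hBC : oDisj B C) :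
    E.η (oUnion A B) C '' (E.img A B ×ˢ (F.obj C : Set ℕ)) ⊆ E.img A (oUnion B C) := by
  have hAB_C : oDisj (oUnion A B) C := fun i =>
    Finset.disjoint_union_left.mpr ⟨hAC i, hBC i⟩
  have hA_BC : oDisj A (oUnion B C) := fun i =>
    Finset.disjoint_union_right.mpr ⟨hAB i, hAC i⟩
  have hD := E.D1 hAB_C hA_BC (funext fun _ => Finset.union_assoc _ _ _)
  have e₁ : oInter (oUnion A B) A = A := funext fun _ =>
    Finset.inter_eq_right.mpr Finset.subset_union_left
  have e₂ : oInter (oUnion A B) (oUnion B C) = B := by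
    funext i
    ext t
    have hA : t ∈ A i → t ∉ B i ∧ t ∉ C i := fun ht =>
      ⟨Finset.disjoint_left.mp (hAB i) ht, Finset.disjoint_left.mp (hAC i) ht⟩
    simp only [oInter, oUnion, Finset.mem_inter, Finset.mem_union]
    tauto
  have e₃ : oInter C (oUnion B C) = C := funext fun _ =>
    Finset.inter_eq_left.mpr Finset.subset_union_right
  rw [e₁, e₂, e₃, oInter_eq_oEmpty hAC.symm] at hD
  change E.img (oUnion A B) C ∩ E.img A (oUnion B C) =
    E.η (oUnion A B) C '' (E.img A B ×ˢ E.img (oEmpty r) C) at hD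
  rw [img_oEmpty_left he] at hD
  exact hD ▸ Set.inter_subset_right

lemma indec_subset_obj (Ω : Obj r) : indec F E Ω ⊆ F.obj Ω := by
  unfold indec
  split_ifs
  exacts [Set.empty_subset _, Set.sdiff_subset]

lemma exists_img_of_notMem_indec {a : ℕ} (hΩ : Ω ≠ oEmpty r) (ha : a ∈ F.obj Ω)
    (hna : a ∉ indec F E Ω) :
    ∃ A B, oDisj A B ∧ A ≠ oEmpty r ∧ B ≠ oEmpty r ∧ oUnion A B = Ω ∧ a ∈ E.img A B := by
  rw [indec, if_neg hΩ, Set.mem_sdiff, not_and_not_right] at hna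
  simp only [Set.mem_iUnion, exists_prop, Prod.exists] at hna
  obtain ⟨A, B, hAB, hA, hB, hU, haAB⟩ := hna ha
  exact ⟨A, B, hAB, hA, hB, hU, haAB⟩

lemma exists_img_of_notMem_indec_of_mem {a ω : ℕ} {ρ : Fin r}
    (he : (F.obj (oEmpty r)).Nonempty) (hω : ω ∈ Ω ρ) (ha : a ∈ F.obj Ω)
    (hna : a ∉ indec F E Ω) :
    ∃ A B, oDisj A B ∧ B ≠ oEmpty r ∧ oUnion A B = Ω ∧ ω ∈ A ρ ∧ a ∈ E.img A B := by
  have hΩ : Ω ≠ oEmpty r := by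
    rintro rfl
    exact Finset.notMem_empty ω hω
  obtain ⟨A, B, hAB, hA, hB, rfl, haAB⟩ := exists_img_of_notMem_indec hΩ ha hna
  rcases Finset.mem_union.mp hω with hωA | hωB
  · exact ⟨A, B, hAB, hB, rfl, hωA, haAB⟩
  · exact ⟨B, A, hAB.symm, hA, oUnion_comm B A, hωB, img_subset_img_swap he hAB haAB⟩

theorem exists_indec_factor {x ω : ℕ} {ρ : Fin r} (he : (F.obj (oEmpty r)).Nonempty)
    (Ω₁ : Obj r) (hsub : oSub Ω₁ Ω) (hω : ω ∈ Ω₁ ρ) (hx : x ∈ E.img Ω₁ (oDiff Ω Ω₁)) :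
    ∃ Ω₂, oSub Ω₂ Ω ∧ ω ∈ Ω₂ ρ ∧
      x ∈ E.η Ω₂ (oDiff Ω Ω₂) '' (indec F E Ω₂ ×ˢ (F.obj (oDiff Ω Ω₂) : Set ℕ)) := by
  induction Ω₁ using WellFoundedLT.induction with
  | _ Ω₁ ih =>
  obtain ⟨⟨a, y⟩, ⟨ha, hy⟩, rfl⟩ := hx
  by_cases hind : a ∈ indec F E Ω₁
  · exact ⟨Ω₁, hsub, hω, (a, y), ⟨hind, hy⟩, rfl⟩
  obtain ⟨A, B, hAB, hB, rfl, hωA, haAB⟩ :=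
    exists_img_of_notMem_indec_of_mem he hω ha hind
  have hAC : oDisj A (oDiff Ω (oUnion A B)) := fun i =>
    (oDisj_oDiff _ Ω i).mono_left (oSub_oUnion_left A B i)
  have hBC : oDisj B (oDiff Ω (oUnion A B)) := fun i =>
    (oDisj_oDiff _ Ω i).mono_left (oSub_oUnion_right A B i)
  have hx : E.η (oUnion A B) (oDiff Ω (oUnion A B)) (a, y) ∈ E.img A (oDiff Ω A) := by
    rw [← oUnion_oDiff_oUnion hAB hsub]
    exact img_assoc_subset he hAB hAC hBC ⟨(a, y), ⟨haAB, hy⟩, rfl⟩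
  exact ih A (lt_oUnion_of_ne_oEmpty hAB hB) (fun i => (oSub_oUnion_left A B i).trans (hsub i))
    hωA hx

end CompOp

theorem stmt7_general {r : ℕ} (F : Species r) (E : CompOp F)
    (Ω : Obj r) (ρ : Fin r) (ω : ℕ) (hω : ω ∈ Ω ρ) :
    (F.obj Ω : Set ℕ) =
      ⋃ (Ω₁ : Obj r) (_ : oSub Ω₁ Ω) (_ : ω ∈ Ω₁ ρ),
        E.η Ω₁ (oDiff Ω Ω₁) '' ((indec F E Ω₁) ×ˢ (F.obj (oDiff Ω Ω₁) : Set ℕ)) := by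
  ext x
  simp only [Set.mem_iUnion, exists_prop]
  constructor
  · intro hx
    have he := E.obj_oEmpty_nonempty hx
    refine CompOp.exists_indec_factor he Ω (fun _ => subset_rfl) hω ?_
    rwa [oDiff_self, CompOp.img_oEmpty_right he]
  · rintro ⟨Ω₁, hsub, -, ⟨a, y⟩, ⟨ha, hy⟩, rfl⟩
    have hmem := E.mem_η (oDisj_oDiff Ω₁ Ω) a (CompOp.indec_subset_obj Ω₁ ha) y hy
    rw [oUnion_oDiff hsub] at hmem
    exact_mod_cast hmem

/-- For nonempty `Ω` and any base point `(ω, ρ) ∈ Ω`,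
`F[Ω] = ⋃_{(ω,ρ) ∈ Ω₁ ⊆ Ω} η(F_Η[Ω₁] × F[Ω − Ω₁])`. -/
theorem stmt7 {r : ℕ} (hr : 0 < r) (F : Species r) (E : CompOp F)
    (hF : ∃ Ω : Obj r, (F.obj Ω).Nonempty)
    (Ω : Obj r) (hΩ : Ω ≠ oEmpty r) (ρ : Fin r) (ω : ℕ) (hω : ω ∈ Ω ρ) :
    (F.obj Ω : Set ℕ) =
      ⋃ (Ω₁ : Obj r) (_ : oSub Ω₁ Ω) (_ : ω ∈ Ω₁ ρ),
        E.η Ω₁ (oDiff Ω Ω₁) '' ((indec F E Ω₁) ×ˢ (F.obj (oDiff Ω Ω₁) : Set ℕ)) :=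
  stmt7_general F E Ω ρ ω hω

end
end

section
/- Let F be an r-sort species admitting a composition operator Η. For every nonempty r-tuple Ω of finite sets, each choice of base point (ω,ρ) ∈ Ω, and every integer k ≥ 1, one has F_Η^(k)[Ω] = ∐ η(F_Η[Ω1] × F_Η^(k−1)[Ω − Ω1]), a disjoint union over all r-tuples Ω1 with (ω,ρ) ∈ Ω1 ⊆ Ω. -/
open scoped Classical

noncomputable section

variable {r : ℕ}

/-!
Say that `x ∈ F[D]` splits along `J` if `x ∈ η(F[D ∖ J] × F[D ∩ J])`. By (D1) and the
injectivity of `η`, `η(y, Δ)` splits along `J` iff both `y` and `Δ` do. If `F[∅]` is empty, so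
is every `F_Η^(k)`; otherwise `η(e, ·)` and `η(·, e)` with `e ∈ F[∅]` are bijections, so every
element splits along each `J` disjoint from or containing its support. Being indecomposable,
and (by induction on `k`) lying in `F_Η^(k)`, depend only on the set of `J` along which an
element splits.

Write `x = η(a, b)` with `a ∈ F_Η[P]`, `b ∈ F_Η^(k-1)[Ω − P]`. If the base point is not in `P`,
induction gives `b = η(c, d)` with the base point in the support `Q` of `c`. Splitting along
`Ω − Q` shows `x = η(c', η(a', d'))`, and `a', c', d'` split along the same sets as `a, c, d`,
so they are of the same kind. For disjointness: if `η(x₁, y₁)` with `x₁ ∈ F_Η[Ω₁]` also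
decomposes along `(Ω₂, Ω − Ω₂)`, then `x₁` splits along `Ω − Ω₂`; since `x₁` is indecomposable
and the base point lies in `Ω₁ ∩ Ω₂`, this forces `Ω₁ ⊆ Ω₂`.
-/

namespace CompOp

variable {r : ℕ} {F : Species r} {E : CompOp F}

/- `oEmpty`, `oUnion`, `oInter`, `oDiff`, `oSub` are definitionally `⊥`, `⊔`, `⊓`, `\`, `≤` of the
Boolean algebra `Fin r → Finset ℕ`, in which everything below is phrased. -/
theorem oEmpty_eq_bot : oEmpty r = ⊥ := rfl

theorem oDisj_iff_disjoint {A B : Obj r} : oDisj A B ↔ Disjoint A B := Pi.disjoint_iff.symm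

def etaImage (F : Species r) (E : CompOp F) (A B : Obj r) : Set ℕ :=
  E.η A B '' ((F.obj A : Set ℕ) ×ˢ (F.obj B : Set ℕ))

theorem eta_mem_etaImage {A B : Obj r} {a b : ℕ} (ha : a ∈ F.obj A) (hb : b ∈ F.obj B) :
    E.η A B (a, b) ∈ etaImage F E A B :=
  ⟨(a, b), ⟨ha, hb⟩, rfl⟩

theorem eta_mem_obj {A B : Obj r} (h : Disjoint A B) {a b : ℕ} (ha : a ∈ F.obj A)
    (hb : b ∈ F.obj B) : E.η A B (a, b) ∈ F.obj (A ⊔ B) :=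
  E.mem_η (oDisj_iff_disjoint.mpr h) a ha b hb

theorem eta_mem_obj_sdiff {A D : Obj r} (h : A ≤ D) {a b : ℕ} (ha : a ∈ F.obj A)
    (hb : b ∈ F.obj (D \ A)) : E.η A (D \ A) (a, b) ∈ F.obj D := by
  simpa only [sup_sdiff_cancel_right h] using eta_mem_obj disjoint_sdiff_self_right ha hb

theorem etaImage_subset {A B : Obj r} (h : Disjoint A B) :
    etaImage F E A B ⊆ F.obj (A ⊔ B) := by
  rintro _ ⟨⟨a, b⟩, ⟨ha, hb⟩, rfl⟩
  exact eta_mem_obj h ha hb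

theorem eta_inj {A B : Obj r} (h : Disjoint A B) {a b a' b' : ℕ} (ha : a ∈ F.obj A)
    (hb : b ∈ F.obj B) (ha' : a' ∈ F.obj A) (hb' : b' ∈ F.obj B)
    (heq : E.η A B (a, b) = E.η A B (a', b')) : a = a' ∧ b = b' :=
  Prod.ext_iff.mp (E.inj_η (oDisj_iff_disjoint.mpr h) ⟨ha, hb⟩ ⟨ha', hb'⟩ heq)

theorem etaImage_inf_subset {A B B' : Obj r} (hB : Disjoint B B') (hA : A ≤ B ⊔ B') :
    etaImage F E (A ⊓ B) (A ⊓ B') ⊆ F.obj A := by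
  have h := etaImage_subset (F := F) (E := E) (A := A ⊓ B) (B := A ⊓ B')
    (hB.mono inf_le_right inf_le_right)
  rwa [← inf_sup_left, inf_eq_left.mpr hA] at h

/-- Axiom (D1), read through the injectivity of `η`. -/
theorem eta_mem_etaImage_iff {A A' B B' : Obj r} (hA : Disjoint A A') (hB : Disjoint B B')
    (hAB : A ⊔ A' = B ⊔ B') {y Δ : ℕ} (hy : y ∈ F.obj A) (hΔ : Δ ∈ F.obj A') :
    E.η A A' (y, Δ) ∈ etaImage F E B B' ↔
      y ∈ etaImage F E (A ⊓ B) (A ⊓ B') ∧ Δ ∈ etaImage F E (A' ⊓ B) (A' ⊓ B') := by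
  have hD1 : etaImage F E A A' ∩ etaImage F E B B' =
      E.η A A' '' (etaImage F E (A ⊓ B) (A ⊓ B') ×ˢ etaImage F E (A' ⊓ B) (A' ⊓ B')) :=
    E.D1 (oDisj_iff_disjoint.mpr hA) (oDisj_iff_disjoint.mpr hB) hAB
  constructor
  · intro hx
    have hx' : E.η A A' (y, Δ) ∈ etaImage F E A A' ∩ etaImage F E B B' :=
      ⟨eta_mem_etaImage hy hΔ, hx⟩
    rw [hD1] at hx'
    obtain ⟨⟨y', Δ'⟩, ⟨hy', hΔ'⟩, heq⟩ := hx'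
    obtain ⟨rfl, rfl⟩ := eta_inj hA
      (etaImage_inf_subset hB (le_sup_left.trans hAB.le) hy')
      (etaImage_inf_subset hB (le_sup_right.trans hAB.le) hΔ') hy hΔ heq
    exact ⟨hy', hΔ'⟩
  · intro h
    have hx : E.η A A' (y, Δ) ∈ etaImage F E A A' ∩ etaImage F E B B' :=
      hD1 ▸ ⟨(y, Δ), h, rfl⟩
    exact hx.2

/-- With `e ∈ F[∅]`, `η(e, ·)` is an injective self-map of the finite set `F[A]`. -/
theorem etaImage_bot_left (hne : (F.obj ⊥).Nonempty) (A : Obj r) :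
    etaImage F E ⊥ A = F.obj A := by
  obtain ⟨e, he⟩ := hne
  refine (etaImage_subset disjoint_bot_left).trans (by rw [bot_sup_eq]) |>.antisymm ?_
  have hmaps : Set.MapsTo (fun y => E.η ⊥ A (e, y)) (F.obj A) (F.obj A) := fun y hy => by
    simpa only [bot_sup_eq, Finset.mem_coe] using eta_mem_obj disjoint_bot_left he hy
  have hinj : Set.InjOn (fun y => E.η ⊥ A (e, y)) (F.obj A) := fun y hy y' hy' h =>
    (eta_inj disjoint_bot_left he hy he hy' h).2
  intro x hx
  obtain ⟨y, hy, rfl⟩ :=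
    (((F.obj A).finite_toSet.injOn_iff_bijOn_of_mapsTo hmaps).mp hinj).surjOn hx
  exact eta_mem_etaImage he hy

theorem etaImage_bot_right (hne : (F.obj ⊥).Nonempty) (A : Obj r) :
    etaImage F E A ⊥ = F.obj A := by
  obtain ⟨e, he⟩ := hne
  refine (etaImage_subset disjoint_bot_right).trans (by rw [sup_bot_eq]) |>.antisymm ?_
  have hmaps : Set.MapsTo (fun y => E.η A ⊥ (y, e)) (F.obj A) (F.obj A) := fun y hy => by
    simpa only [sup_bot_eq, Finset.mem_coe] using eta_mem_obj disjoint_bot_right hy he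
  have hinj : Set.InjOn (fun y => E.η A ⊥ (y, e)) (F.obj A) := fun y hy y' hy' h =>
    (eta_inj disjoint_bot_right hy he hy' he h).1
  intro x hx
  obtain ⟨y, hy, rfl⟩ :=
    (((F.obj A).finite_toSet.injOn_iff_bijOn_of_mapsTo hmaps).mp hinj).surjOn hx
  exact eta_mem_etaImage hy he

/-- Every decomposition of `D` is of the form `(D \ J, D ⊓ J)`. -/
def Splits (F : Species r) (E : CompOp F) (D J : Obj r) (x : ℕ) : Prop :=
  x ∈ etaImage F E (D \ J) (D ⊓ J)

theorem splits_congr {D J J' : Obj r} (h : D ⊓ J = D ⊓ J') {x : ℕ} :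
    Splits F E D J x ↔ Splits F E D J' x := by
  rw [Splits, Splits, ← sdiff_inf_self_left D J, h, sdiff_inf_self_left]

theorem splits_sdiff_iff {A D : Obj r} (hA : A ≤ D) {x : ℕ} :
    Splits F E D (D \ A) x ↔ x ∈ etaImage F E A (D \ A) := by
  rw [Splits, sdiff_sdiff_eq_self hA, inf_sdiff_right]

theorem splits_eta_iff {A D J : Obj r} (hA : A ≤ D) {y Δ : ℕ} (hy : y ∈ F.obj A)
    (hΔ : Δ ∈ F.obj (D \ A)) :
    Splits F E D J (E.η A (D \ A) (y, Δ)) ↔ Splits F E A J y ∧ Splits F E (D \ A) J Δ := by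
  have inf_sdiff {X : Obj r} (hX : X ≤ D) : X ⊓ (D \ J) = X \ J := by
    rw [← inf_sdiff_assoc, inf_eq_left.mpr hX]
  have inf_inf {X : Obj r} (hX : X ≤ D) : X ⊓ (D ⊓ J) = X ⊓ J := by
    rw [← inf_assoc, inf_eq_left.mpr hX]
  rw [Splits, eta_mem_etaImage_iff disjoint_sdiff_self_right (disjoint_inf_sdiff.symm)
      (by rw [sup_sdiff_cancel_right hA, sup_sdiff_inf]) hy hΔ,
    inf_sdiff hA, inf_inf hA, inf_sdiff sdiff_le, inf_inf sdiff_le, Splits, Splits]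

theorem splits_of_disjoint (hne : (F.obj ⊥).Nonempty) {D J : Obj r} (h : Disjoint D J)
    {x : ℕ} (hx : x ∈ F.obj D) : Splits F E D J x := by
  rw [Splits, h.sdiff_eq_left, h.eq_bot, etaImage_bot_right hne]
  exact hx

theorem splits_of_le (hne : (F.obj ⊥).Nonempty) {D J : Obj r} (h : D ≤ J) {x : ℕ}
    (hx : x ∈ F.obj D) : Splits F E D J x := by
  rw [Splits, sdiff_eq_bot_iff.mpr h, inf_eq_left.mpr h, etaImage_bot_left hne]
  exact hx

theorem splits_eta_iff_left (hne : (F.obj ⊥).Nonempty) {A D J : Obj r} (hA : A ≤ D)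
    (hJ : J ≤ A) {y Δ : ℕ} (hy : y ∈ F.obj A) (hΔ : Δ ∈ F.obj (D \ A)) :
    Splits F E D J (E.η A (D \ A) (y, Δ)) ↔ Splits F E A J y := by
  rw [splits_eta_iff hA hy hΔ,
    and_iff_left (splits_of_disjoint hne (disjoint_sdiff_self_left.mono_right hJ) hΔ)]

theorem splits_eta_iff_right (hne : (F.obj ⊥).Nonempty) {A D J : Obj r} (hA : A ≤ D)
    (hJ : J ≤ D \ A) {y Δ : ℕ} (hy : y ∈ F.obj A) (hΔ : Δ ∈ F.obj (D \ A)) :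
    Splits F E D J (E.η A (D \ A) (y, Δ)) ↔ Splits F E (D \ A) J Δ := by
  rw [splits_eta_iff hA hy hΔ,
    and_iff_right (splits_of_disjoint hne (disjoint_sdiff_self_right.mono_right hJ) hy)]

theorem mem_indec_iff {D : Obj r} {x : ℕ} :
    x ∈ indec F E D ↔ D ≠ ⊥ ∧ x ∈ F.obj D ∧
      ∀ J : Obj r, ¬Disjoint D J → ¬D ≤ J → ¬Splits F E D J x := by
  rw [indec]
  split_ifs with hD
  · simp only [Set.mem_empty_iff_false, false_iff, not_and]
    exact fun h => absurd hD h
  · simp only [Set.mem_sdiff, Set.mem_iUnion, exists_prop, Prod.exists, not_exists, not_and,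
      Finset.mem_coe]
    refine ⟨fun ⟨hx, hdec⟩ => ⟨hD, hx, fun J hDJ hDJ' hs => ?_⟩,
      fun ⟨_, hx, hsplit⟩ => ⟨hx, fun I J hIJ hI hJ hU hs => ?_⟩⟩
    · exact hdec (D \ J) (D ⊓ J) (oDisj_iff_disjoint.mpr disjoint_inf_sdiff.symm)
        (sdiff_eq_bot_iff.not.mpr hDJ') (disjoint_iff.not.mp hDJ) (sup_sdiff_inf D J) hs
    · rw [oDisj_iff_disjoint] at hIJ
      obtain rfl : I ⊔ J = D := hU
      refine hsplit J (fun h => hJ (disjoint_self.mp (disjoint_sup_left.mp h).2))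
        (fun h => hI (hIJ.eq_bot_of_le (sup_le_iff.mp h).1)) ?_
      rwa [Splits, sup_sdiff_right_self, hIJ.sdiff_eq_left,
        inf_eq_right.mpr le_sup_right]

theorem indec_subset {D : Obj r} : indec F E D ⊆ F.obj D :=
  fun _ hx => (mem_indec_iff.mp hx).2.1

theorem mem_indecK_zero {D : Obj r} {x : ℕ} :
    x ∈ indecK F E 0 D ↔ D = ⊥ ∧ x ∈ F.obj ⊥ := by
  simp only [indecK, oEmpty_eq_bot]
  split_ifs with h <;> simp [h]

theorem mem_indecK_succ {k : ℕ} {D : Obj r} {x : ℕ} :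
    x ∈ indecK F E (k + 1) D ↔
      ∃ A ≤ D, x ∈ E.η A (D \ A) '' (indec F E A ×ˢ indecK F E k (D \ A)) := by
  simp only [indecK, Set.mem_iUnion, exists_prop]
  rfl

theorem indecK_subset : ∀ {k : ℕ} {D : Obj r}, indecK F E k D ⊆ F.obj D
  | 0, _, _, hx => by
    obtain ⟨rfl, hx'⟩ := mem_indecK_zero.mp hx
    exact hx'
  | _ + 1, _, _, hx => by
    obtain ⟨A, hA, ⟨a, b⟩, ⟨ha, hb⟩, rfl⟩ := mem_indecK_succ.mp hx
    exact eta_mem_obj_sdiff hA (indec_subset ha) (indecK_subset hb)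

theorem obj_bot_nonempty_of_mem_indecK :
    ∀ {k : ℕ} {D : Obj r} {x : ℕ}, x ∈ indecK F E k D → (F.obj ⊥).Nonempty
  | 0, _, x, hx => ⟨x, (mem_indecK_zero.mp hx).2⟩
  | _ + 1, _, _, hx => by
    obtain ⟨_, -, ⟨_, _⟩, ⟨-, hb⟩, -⟩ := mem_indecK_succ.mp hx
    exact obj_bot_nonempty_of_mem_indecK hb

def SameSplits (F : Species r) (E : CompOp F) (D : Obj r) (x y : ℕ) : Prop :=
  ∀ J, Splits F E D J x ↔ Splits F E D J y

theorem sameSplits_of_forall_le {D : Obj r} {x y : ℕ}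
    (h : ∀ J ≤ D, Splits F E D J x ↔ Splits F E D J y) : SameSplits F E D x y := fun J => by
  rw [← splits_congr (inf_left_idem D J), ← splits_congr (inf_left_idem D J)]
  exact h _ inf_le_left

theorem mem_indec_of_sameSplits {D : Obj r} {x y : ℕ} (hx : x ∈ indec F E D)
    (hy : y ∈ F.obj D) (h : SameSplits F E D x y) : y ∈ indec F E D := by
  obtain ⟨hD, -, hsplit⟩ := mem_indec_iff.mp hx
  exact mem_indec_iff.mpr ⟨hD, hy, fun J hDJ hDJ' => (h J).not.mp (hsplit J hDJ hDJ')⟩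

theorem sameSplits_eta (hne : (F.obj ⊥).Nonempty) {A D : Obj r} (hA : A ≤ D)
    {y Δ y₀ Δ₀ : ℕ} (hy : y ∈ F.obj A) (hΔ : Δ ∈ F.obj (D \ A)) (hy₀ : y₀ ∈ F.obj A)
    (hΔ₀ : Δ₀ ∈ F.obj (D \ A))
    (h : SameSplits F E D (E.η A (D \ A) (y, Δ)) (E.η A (D \ A) (y₀, Δ₀))) :
    SameSplits F E A y y₀ ∧ SameSplits F E (D \ A) Δ Δ₀ := by
  constructor <;> refine sameSplits_of_forall_le fun J hJ => ?_
  · rw [← splits_eta_iff_left hne hA hJ hy hΔ, ← splits_eta_iff_left hne hA hJ hy₀ hΔ₀]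
    exact h J
  · rw [← splits_eta_iff_right hne hA hJ hy hΔ, ← splits_eta_iff_right hne hA hJ hy₀ hΔ₀]
    exact h J

theorem mem_indecK_of_sameSplits (hne : (F.obj ⊥).Nonempty) :
    ∀ {k : ℕ} {D : Obj r} {x y : ℕ}, x ∈ indecK F E k D → y ∈ F.obj D →
      SameSplits F E D x y → y ∈ indecK F E k D
  | 0, _, _, _, hx, hy, _ => by
    obtain ⟨rfl, -⟩ := mem_indecK_zero.mp hx
    exact mem_indecK_zero.mpr ⟨rfl, hy⟩
  | _ + 1, D, _, y, hx, hy, h => by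
    obtain ⟨A, hA, ⟨c, e⟩, ⟨hc, he⟩, rfl⟩ := mem_indecK_succ.mp hx
    have hcF := indec_subset hc
    have heF := indecK_subset he
    obtain ⟨⟨c', e'⟩, ⟨hc', he'⟩, rfl⟩ : y ∈ etaImage F E A (D \ A) :=
      (splits_sdiff_iff hA).mp ((h _).mp ((splits_sdiff_iff hA).mpr (eta_mem_etaImage hcF heF)))
    obtain ⟨hcc', hee'⟩ := sameSplits_eta hne hA hcF heF hc' he' h
    exact mem_indecK_succ.mpr ⟨A, hA, ⟨c', e'⟩,
      ⟨mem_indec_of_sameSplits hc hc' hcc', mem_indecK_of_sameSplits hne he he' hee'⟩, rfl⟩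

section Swap

variable {Ω P Q : Obj r} (hP : P ≤ Ω) (hQ : Q ≤ Ω \ P)
include hP hQ

theorem le_sdiff_of_le_sdiff : P ≤ Ω \ Q :=
  le_sdiff.mpr ⟨hP, (le_sdiff.mp hQ).2.symm⟩

theorem exists_eta_eta_eq_eta_eta (hne : (F.obj ⊥).Nonempty) {a c d : ℕ}
    (ha : a ∈ F.obj P) (hc : c ∈ F.obj Q) (hd : d ∈ F.obj ((Ω \ P) \ Q)) :
    ∃ u a₀ d₀, u ∈ F.obj Q ∧ a₀ ∈ F.obj P ∧ d₀ ∈ F.obj ((Ω \ Q) \ P) ∧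
      E.η P (Ω \ P) (a, E.η Q ((Ω \ P) \ Q) (c, d)) =
        E.η Q (Ω \ Q) (u, E.η P ((Ω \ Q) \ P) (a₀, d₀)) := by
  have hQΩ : Q ≤ Ω := hQ.trans sdiff_le
  have hPQ := le_sdiff_of_le_sdiff hP hQ
  have hb := eta_mem_obj_sdiff (E := E) hQ hc hd
  obtain ⟨⟨u, w⟩, ⟨hu, hw⟩, hx⟩ :
      E.η P (Ω \ P) (a, E.η Q ((Ω \ P) \ Q) (c, d)) ∈ etaImage F E Q (Ω \ Q) := by
    rw [← splits_sdiff_iff hQΩ, splits_eta_iff hP ha hb, splits_eta_iff hQ hc hd]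
    exact ⟨splits_of_le hne hPQ ha, splits_of_disjoint hne disjoint_sdiff_self_right hc,
      splits_of_le hne (sdiff_le_sdiff_right sdiff_le) hd⟩
  obtain ⟨⟨a₀, d₀⟩, ⟨ha₀, hd₀⟩, rfl⟩ : w ∈ etaImage F E P ((Ω \ Q) \ P) := by
    have hsplit := (splits_sdiff_iff (F := F) (E := E) hP).mpr (eta_mem_etaImage ha hb)
    rw [← hx, splits_eta_iff hQΩ hu hw] at hsplit
    rw [← splits_sdiff_iff hPQ]
    refine (splits_congr ?_).mp hsplit.2
    rw [inf_sdiff_right, ← inf_sdiff_assoc, inf_eq_left.mpr sdiff_le]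
  exact ⟨u, a₀, d₀, hu, ha₀, hd₀, hx.symm⟩

theorem sameSplits_of_eta_eta_eq (hne : (F.obj ⊥).Nonempty) {a c d u a₀ d₀ : ℕ}
    (ha : a ∈ F.obj P) (hc : c ∈ F.obj Q) (hd : d ∈ F.obj ((Ω \ P) \ Q))
    (hu : u ∈ F.obj Q) (ha₀ : a₀ ∈ F.obj P) (hd₀ : d₀ ∈ F.obj ((Ω \ Q) \ P))
    (h : E.η P (Ω \ P) (a, E.η Q ((Ω \ P) \ Q) (c, d)) =
      E.η Q (Ω \ Q) (u, E.η P ((Ω \ Q) \ P) (a₀, d₀))) :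
    SameSplits F E P a a₀ ∧ SameSplits F E Q c u ∧ SameSplits F E ((Ω \ P) \ Q) d d₀ := by
  have hQΩ : Q ≤ Ω := hQ.trans sdiff_le
  have hPQ := le_sdiff_of_le_sdiff hP hQ
  have hb := eta_mem_obj_sdiff (E := E) hQ hc hd
  have hw := eta_mem_obj_sdiff (E := E) hPQ ha₀ hd₀
  refine ⟨sameSplits_of_forall_le fun J hJ => ?_, sameSplits_of_forall_le fun J hJ => ?_,
    sameSplits_of_forall_le fun J hJ => ?_⟩
  · rw [← splits_eta_iff_left hne hP hJ ha hb, h,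
      splits_eta_iff_right hne hQΩ (hJ.trans hPQ) hu hw,
      splits_eta_iff_left hne hPQ hJ ha₀ hd₀]
  · rw [← splits_eta_iff_left hne hQ hJ hc hd,
      ← splits_eta_iff_right hne hP (hJ.trans hQ) ha hb, h,
      splits_eta_iff_left hne hQΩ hJ hu hw]
  · have hJ' : J ≤ (Ω \ Q) \ P := by rwa [sdiff_sdiff_comm]
    rw [← splits_eta_iff_right hne hQ hJ hc hd,
      ← splits_eta_iff_right hne hP (hJ.trans sdiff_le) ha hb, h,
      splits_eta_iff_right hne hQΩ (hJ'.trans sdiff_le) hu hw,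
      splits_eta_iff_right hne hPQ hJ' ha₀ hd₀, sdiff_sdiff_comm]

theorem eta_eta_mem_image_swap (hne : (F.obj ⊥).Nonempty) {m : ℕ} {a c d : ℕ}
    (ha : a ∈ indec F E P) (hc : c ∈ indec F E Q) (hd : d ∈ indecK F E m ((Ω \ P) \ Q)) :
    E.η P (Ω \ P) (a, E.η Q ((Ω \ P) \ Q) (c, d)) ∈
      E.η Q (Ω \ Q) '' (indec F E Q ×ˢ indecK F E (m + 1) (Ω \ Q)) := by
  obtain ⟨u, a₀, d₀, hu, ha₀, hd₀, h⟩ := exists_eta_eta_eq_eta_eta hP hQ hne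
    (indec_subset ha) (indec_subset hc) (indecK_subset hd)
  obtain ⟨haa₀, hcu, hdd₀⟩ := sameSplits_of_eta_eta_eq hP hQ hne
    (indec_subset ha) (indec_subset hc) (indecK_subset hd) hu ha₀ hd₀ h
  refine ⟨(u, E.η P ((Ω \ Q) \ P) (a₀, d₀)), ⟨mem_indec_of_sameSplits hc hu hcu,
    mem_indecK_succ.mpr ⟨P, le_sdiff_of_le_sdiff hP hQ, (a₀, d₀),
      ⟨mem_indec_of_sameSplits ha ha₀ haa₀, ?_⟩, rfl⟩⟩, h.symm⟩
  rw [sdiff_sdiff_comm] at hd₀ ⊢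
  exact mem_indecK_of_sameSplits hne hd hd₀ hdd₀

end Swap

theorem exists_basepoint_mem_image (hne : (F.obj ⊥).Nonempty) {ρ : Fin r} {ω : ℕ} :
    ∀ {k : ℕ} {Ω : Obj r} {x : ℕ}, ω ∈ Ω ρ → x ∈ indecK F E (k + 1) Ω →
      ∃ Ω₁ ≤ Ω, ω ∈ Ω₁ ρ ∧
        x ∈ E.η Ω₁ (Ω \ Ω₁) '' (indec F E Ω₁ ×ˢ indecK F E k (Ω \ Ω₁))
  | k, Ω, _, hω, hx => by
    obtain ⟨P, hP, ⟨a, b⟩, ⟨ha, hb⟩, rfl⟩ := mem_indecK_succ.mp hx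
    by_cases hωP : ω ∈ P ρ
    · exact ⟨P, hP, hωP, ⟨a, b⟩, ⟨ha, hb⟩, rfl⟩
    have hωb : ω ∈ (Ω \ P) ρ := Finset.mem_sdiff.mpr ⟨hω, hωP⟩
    cases k with
    | zero =>
      obtain ⟨hb, -⟩ := mem_indecK_zero.mp hb
      rw [hb] at hωb
      exact absurd hωb (Finset.notMem_empty ω)
    | succ k =>
      obtain ⟨Q, hQ, hωQ, ⟨c, d⟩, ⟨hc, hd⟩, rfl⟩ := exists_basepoint_mem_image hne hωb hb
      exact ⟨Q, hQ.trans sdiff_le, hωQ, eta_eta_mem_image_swap hP hQ hne ha hc hd⟩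

theorem le_of_eta_mem_etaImage {Ω Ω₁ Ω₂ : Obj r} (h₁ : Ω₁ ≤ Ω) (h₂ : Ω₂ ≤ Ω) {ρ : Fin r}
    {ω : ℕ} (hω₁ : ω ∈ Ω₁ ρ) (hω₂ : ω ∈ Ω₂ ρ) {x y : ℕ} (hx : x ∈ indec F E Ω₁)
    (hy : y ∈ F.obj (Ω \ Ω₁)) (h : E.η Ω₁ (Ω \ Ω₁) (x, y) ∈ etaImage F E Ω₂ (Ω \ Ω₂)) :
    Ω₁ ≤ Ω₂ := by
  have hsplit : Splits F E Ω₁ (Ω \ Ω₂) x :=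
    ((splits_eta_iff h₁ (indec_subset hx) hy).mp ((splits_sdiff_iff h₂).mpr h)).1
  have hnle : ¬Ω₁ ≤ Ω \ Ω₂ := fun hle => (Finset.mem_sdiff.mp (hle ρ hω₁)).2 hω₂
  refine (disjoint_sdiff_iff_le h₁ h₂).mp ?_
  by_contra hdisj
  exact (mem_indec_iff.mp hx).2.2 _ hdisj hnle hsplit

theorem image_inter_image_eq_empty {Ω Ω₁ Ω₂ : Obj r} (h₁ : Ω₁ ≤ Ω) (h₂ : Ω₂ ≤ Ω)
    {ρ : Fin r} {ω : ℕ} (hω₁ : ω ∈ Ω₁ ρ) (hω₂ : ω ∈ Ω₂ ρ) (h₁₂ : Ω₁ ≠ Ω₂) {S₁ S₂ : Set ℕ}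
    (hS₁ : S₁ ⊆ F.obj (Ω \ Ω₁)) (hS₂ : S₂ ⊆ F.obj (Ω \ Ω₂)) :
    E.η Ω₁ (Ω \ Ω₁) '' (indec F E Ω₁ ×ˢ S₁) ∩ E.η Ω₂ (Ω \ Ω₂) '' (indec F E Ω₂ ×ˢ S₂) = ∅ := by
  refine Set.eq_empty_of_forall_notMem ?_
  rintro _ ⟨⟨⟨x₁, y₁⟩, ⟨hx₁, hy₁⟩, rfl⟩, ⟨⟨x₂, y₂⟩, ⟨hx₂, hy₂⟩, h⟩⟩
  have hy₁ := hS₁ hy₁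
  have hy₂ := hS₂ hy₂
  refine h₁₂ (le_antisymm (le_of_eta_mem_etaImage h₁ h₂ hω₁ hω₂ hx₁ hy₁ ?_)
    (le_of_eta_mem_etaImage h₂ h₁ hω₂ hω₁ hx₂ hy₂ ?_))
  · exact h ▸ eta_mem_etaImage (indec_subset hx₂) hy₂
  · exact h.symm ▸ eta_mem_etaImage (indec_subset hx₁) hy₁

end CompOp

theorem stmt13_general {r : ℕ} (F : Species r) (E : CompOp F)
    (Ω : Obj r) (ρ : Fin r) (ω : ℕ) (hω : ω ∈ Ω ρ)
    (k : ℕ) (hk : 1 ≤ k) :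
    indecK F E k Ω =
      (⋃ (Ω₁ : Obj r) (_ : oSub Ω₁ Ω) (_ : ω ∈ Ω₁ ρ),
        E.η Ω₁ (oDiff Ω Ω₁) '' ((indec F E Ω₁) ×ˢ (indecK F E (k - 1) (oDiff Ω Ω₁)))) ∧
    (∀ Ω₁ Ω₂ : Obj r, oSub Ω₁ Ω → oSub Ω₂ Ω → ω ∈ Ω₁ ρ → ω ∈ Ω₂ ρ → Ω₁ ≠ Ω₂ →
      (E.η Ω₁ (oDiff Ω Ω₁) '' ((indec F E Ω₁) ×ˢ (indecK F E (k - 1) (oDiff Ω Ω₁)))) ∩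
        (E.η Ω₂ (oDiff Ω Ω₂) ''
          ((indec F E Ω₂) ×ˢ (indecK F E (k - 1) (oDiff Ω Ω₂)))) = ∅) := by
  obtain ⟨k, rfl⟩ : ∃ m, k = m + 1 := ⟨k - 1, by omega⟩
  rw [Nat.add_sub_cancel]
  refine ⟨Set.Subset.antisymm (fun x hx => ?_) (fun x hx => ?_),
    fun Ω₁ Ω₂ h₁ h₂ hω₁ hω₂ h₁₂ => ?_⟩
  · obtain ⟨Ω₁, h₁, hω₁, hx₁⟩ := CompOp.exists_basepoint_mem_image
      (CompOp.obj_bot_nonempty_of_mem_indecK hx) hω hx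
    exact Set.mem_iUnion₂.mpr ⟨Ω₁, h₁, Set.mem_iUnion.mpr ⟨hω₁, hx₁⟩⟩
  · simp only [Set.mem_iUnion] at hx
    obtain ⟨Ω₁, h₁, -, hx₁⟩ := hx
    exact CompOp.mem_indecK_succ.mpr ⟨Ω₁, h₁, hx₁⟩
  · exact CompOp.image_inter_image_eq_empty h₁ h₂ hω₁ hω₂ h₁₂ CompOp.indecK_subset
      CompOp.indecK_subset

/-- For nonempty `Ω`, any base point `(ω, ρ) ∈ Ω` and any `k ≥ 1`,
`F_Η^(k)[Ω] = ∐_{(ω,ρ) ∈ Ω₁ ⊆ Ω} η(F_Η[Ω₁] × F_Η^(k-1)[Ω − Ω₁])`,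
a disjoint union. -/
theorem stmt13 {r : ℕ} (hr : 0 < r) (F : Species r) (E : CompOp F)
    (hF : ∃ Ω : Obj r, (F.obj Ω).Nonempty)
    (Ω : Obj r) (hΩ : Ω ≠ oEmpty r) (ρ : Fin r) (ω : ℕ) (hω : ω ∈ Ω ρ)
    (k : ℕ) (hk : 1 ≤ k) :
    indecK F E k Ω =
      (⋃ (Ω₁ : Obj r) (_ : oSub Ω₁ Ω) (_ : ω ∈ Ω₁ ρ),
        E.η Ω₁ (oDiff Ω Ω₁) '' ((indec F E Ω₁) ×ˢ (indecK F E (k - 1) (oDiff Ω Ω₁)))) ∧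
    (∀ Ω₁ Ω₂ : Obj r, oSub Ω₁ Ω → oSub Ω₂ Ω → ω ∈ Ω₁ ρ → ω ∈ Ω₂ ρ → Ω₁ ≠ Ω₂ →
      (E.η Ω₁ (oDiff Ω Ω₁) '' ((indec F E Ω₁) ×ˢ (indecK F E (k - 1) (oDiff Ω Ω₁)))) ∩
        (E.η Ω₂ (oDiff Ω Ω₂) ''
          ((indec F E Ω₂) ×ˢ (indecK F E (k - 1) (oDiff Ω Ω₂)))) = ∅) :=
  stmt13_general F E Ω ρ ω hω k hk
end
end
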